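/- arXiv:1402.3685 — 3 statements merged into one kernel-verified Lean document; each statement's English description precedes it below -/
import Mathlib

section
/- Let A be an abelian category and let (U,V) be the standard t-structure on D^b(A). For any object A ∈ A, any object U ∈ U, and any morphism f: A[0] → U[1] in D^b(A), there exists an epimorphism B → A in A such that the composition B[0] → A[0] → U[1] is zero. -/
/-!
Common definitions for formalizing statements from
"Derived equivalences for hereditary algebras: the role of the Serre functor".
-/

noncomputable section

open CategoryTheory CategoryTheory.Limits CategoryTheory.Pretriangulated

universe w₁ v₁ u₁ w v u

namespace Paper

variable (D : Type u) [Category.{v} D]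

/-- An object of a preadditive category is indecomposable if it is nonzero and any
biproduct decomposition `X ≅ Y ⊞ Z` has `Y = 0` or `Z = 0` (expressed elementarily). -/
def IndecomposableObj [Preadditive D] (X : D) : Prop :=
  ¬ IsZero X ∧
    ∀ (Y Z : D) (i : Y ⟶ X) (p : X ⟶ Y) (j : Z ⟶ X) (q : X ⟶ Z),
      i ≫ p = 𝟙 Y → j ≫ q = 𝟙 Z → i ≫ q = 0 → j ≫ p = 0 → p ≫ i + q ≫ j = 𝟙 X →
        IsZero Y ∨ IsZero Z

/-- A morphism `f : A ⟶ C` is right minimal if any `h : A ⟶ A` with `h ≫ f = f`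
is an automorphism. -/
def RightMinimal {A C : D} (f : A ⟶ C) : Prop :=
  ∀ h : A ⟶ A, h ≫ f = f → IsIso h

/-- The equivalence relation `f ∼_C g` on morphisms with target `C`. -/
def EquivOver {A B C : D} (f : A ⟶ C) (g : B ⟶ C) : Prop :=
  (∃ h₁ : A ⟶ B, h₁ ≫ g = f) ∧ (∃ h₂ : B ⟶ A, h₂ ≫ f = g)

section Serre

variable (k : Type u₁) [Field k] [Preadditive D] [CategoryTheory.Linear k D]

/-- A Serre functor on a `k`-linear category `D`: an autoequivalence `F` together with
isomorphisms `Hom(X,Y) ≅ Hom(Y, F X)*`, natural in `X` and `Y`. -/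
structure SerreFunctor where
  F : D ⥤ D
  isEquivalence : F.IsEquivalence
  η : ∀ X Y : D, (X ⟶ Y) ≃ₗ[k] Module.Dual k (Y ⟶ F.obj X)
  naturality_left : ∀ ⦃X' X Y : D⦄ (u : X' ⟶ X) (f : X ⟶ Y) (g : Y ⟶ F.obj X'),
    η X' Y (u ≫ f) g = η X Y f (g ≫ F.map u)
  naturality_right : ∀ ⦃X Y Y' : D⦄ (f : X ⟶ Y) (v : Y ⟶ Y') (g : Y' ⟶ F.obj X),
    η X Y' (f ≫ v) g = η X Y f (v ≫ g)

/-- A Serre functor on the strictly full subcategory of `D` whose objects are `S`;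
the Hom-spaces are the ambient ones. -/
structure SerreFunctorOn (S : Set D) where
  F : ObjectProperty.FullSubcategory (· ∈ S) ⥤ ObjectProperty.FullSubcategory (· ∈ S)
  isEquivalence : F.IsEquivalence
  η : ∀ X Y : ObjectProperty.FullSubcategory (· ∈ S),
    (X.obj ⟶ Y.obj) ≃ₗ[k] Module.Dual k (Y.obj ⟶ (F.obj X).obj)
  naturality_left : ∀ ⦃X' X Y : ObjectProperty.FullSubcategory (· ∈ S)⦄ (u : X' ⟶ X) (f : X.obj ⟶ Y.obj)
      (g : Y.obj ⟶ (F.obj X').obj),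
    η X' Y ((show X'.obj ⟶ X.obj from u.hom) ≫ f) g
      = η X Y f (g ≫ (show (F.obj X').obj ⟶ (F.obj X).obj from (F.map u).hom))
  naturality_right : ∀ ⦃X Y Y' : ObjectProperty.FullSubcategory (· ∈ S)⦄ (f : X.obj ⟶ Y.obj) (v : Y ⟶ Y')
      (g : Y'.obj ⟶ (F.obj X).obj),
    η X Y' (f ≫ (show Y.obj ⟶ Y'.obj from v.hom)) g = η X Y f ((show Y.obj ⟶ Y'.obj from v.hom) ≫ g)

end Serre

section Triangulated

variable [HasZeroObject D] [Preadditive D] [HasShift D ℤ]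
  [∀ n : ℤ, (shiftFunctor D n).Additive] [Pretriangulated D]

/-- A t-structure on the strictly full (pretriangulated) subcategory of `D` with objects `S`:
a pair `(U, V)` of strictly full subcategories with `U[1] ⊆ U`, `V ⊆ V[1]`,
`Hom(U[1], V) = 0`, and truncation triangles for every object of `S`. -/
structure TStructureOn (S : Set D) where
  U : Set D
  V : Set D
  U_subset : U ⊆ S
  V_subset : V ⊆ S
  U_iso : ∀ ⦃X Y : D⦄, (X ≅ Y) → X ∈ U → Y ∈ U
  V_iso : ∀ ⦃X Y : D⦄, (X ≅ Y) → X ∈ V → Y ∈ V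
  U_shift : ∀ ⦃X : D⦄, X ∈ U → X⟦(1 : ℤ)⟧ ∈ U
  V_shift : ∀ ⦃X : D⦄, X ∈ V → X⟦(-1 : ℤ)⟧ ∈ V
  hom_zero : ∀ ⦃X Y : D⦄, X ∈ U → Y ∈ V → ∀ f : X⟦(1 : ℤ)⟧ ⟶ Y, f = 0
  exists_triangle : ∀ C₀ ∈ S, ∃ (X Y : D) (_ : X ∈ U) (_ : Y⟦(1 : ℤ)⟧ ∈ V)
    (f : X ⟶ C₀) (g : C₀ ⟶ Y) (h : Y ⟶ X⟦(1 : ℤ)⟧), Triangle.mk f g h ∈ distTriang D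

namespace TStructureOn

variable {D} {S : Set D} (t : TStructureOn D S)

/-- The heart of a t-structure, as a set of objects. -/
def heartSet : Set D := t.U ∩ t.V

/-- The heart of a t-structure, as a (full sub)category. -/
abbrev Heart := ObjectProperty.FullSubcategory (· ∈ t.heartSet)

/-- The inclusion of the heart into the ambient category. -/
def heartIncl : t.Heart ⥤ D := ObjectProperty.ι _

/-- A t-structure is bounded if every object of the (sub)category lies in some shift
of the aisle and in some shift of the coaisle. -/
def IsBounded : Prop :=
  (∀ X ∈ S, ∃ n : ℤ, X⟦n⟧ ∈ t.U) ∧ (∀ X ∈ S, ∃ n : ℤ, X⟦n⟧ ∈ t.V)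

end TStructureOn

/-- The aisle `U` of a t-structure is stable under a Serre functor on the ambient
(sub)category. -/
def SerreStable (k : Type u₁) [Field k] [CategoryTheory.Linear k D] {S : Set D}
    (Se : SerreFunctorOn D k S) (U : Set D) : Prop :=
  ∀ X : ObjectProperty.FullSubcategory (· ∈ S), X.obj ∈ U → (Se.F.obj X).obj ∈ U

/-- A preaisle in the strictly full subcategory of `D` with objects `S`: a strictly full
subcategory closed under suspension and extensions. -/
def IsPreaisleOn (S P : Set D) : Prop :=
  P ⊆ S ∧ (∀ ⦃X Y : D⦄, (X ≅ Y) → X ∈ P → Y ∈ P) ∧ (∀ ⦃X : D⦄, X ∈ P → X⟦(1 : ℤ)⟧ ∈ P) ∧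
    (∀ T : Triangle D, (T ∈ distTriang D) → T.obj₁ ∈ P → T.obj₃ ∈ P → T.obj₂ ∈ S → T.obj₂ ∈ P)

/-- The smallest preaisle (in the subcategory with objects `S`) containing `E`. -/
def preaisleGenOn (S : Set D) (E : D) : Set D :=
  ⋂₀ {P : Set D | IsPreaisleOn D S P ∧ E ∈ P}

/-- A thick (triangulated, retract-closed) subcategory of the subcategory with objects `S`. -/
def IsThickOn (S P : Set D) : Prop :=
  P ⊆ S ∧ (∀ ⦃X Y : D⦄, (X ≅ Y) → X ∈ P → Y ∈ P) ∧
    (∀ ⦃X : D⦄, X ∈ P → X⟦(1 : ℤ)⟧ ∈ P ∧ X⟦(-1 : ℤ)⟧ ∈ P) ∧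
    (∀ T : Triangle D, (T ∈ distTriang D) → T.obj₁ ∈ P → T.obj₃ ∈ P → T.obj₂ ∈ S → T.obj₂ ∈ P) ∧
    (∀ ⦃X Y : D⦄, X ∈ P → Y ∈ S → ∀ (i : Y ⟶ X) (r : X ⟶ Y), i ≫ r = 𝟙 Y → Y ∈ P)

/-- The smallest thick subcategory (of the subcategory with objects `S`) containing `E`. -/
def thickGenOn (S : Set D) (E : D) : Set D :=
  ⋂₀ {P : Set D | IsThickOn D S P ∧ E ∈ P}

/-- `E` is a partial silting object: `Hom(E, E[n]) = 0` for `n > 0`. -/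
def IsPartialSilting (S : Set D) (E : D) : Prop :=
  E ∈ S ∧ ∀ n : ℤ, 0 < n → ∀ f : E ⟶ E⟦n⟧, f = 0

/-- `E` is a silting object: partial silting and it generates the category as a thick
subcategory. -/
def IsSilting (S : Set D) (E : D) : Prop :=
  IsPartialSilting D S E ∧ thickGenOn D S E = S

/-- `E` is a partial tilting object: `Hom(E, E[n]) = 0` for `n ≠ 0`. -/
def IsPartialTilting (S : Set D) (E : D) : Prop :=
  E ∈ S ∧ ∀ n : ℤ, n ≠ 0 → ∀ f : E ⟶ E⟦n⟧, f = 0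

/-- `E` is a tilting object: partial tilting and it generates the category as a thick
subcategory. -/
def IsTilting (S : Set D) (E : D) : Prop :=
  IsPartialTilting D S E ∧ thickGenOn D S E = S

/-- The aisle `U` of the t-structure `t` is finitely generated: it is the smallest
preaisle containing some partial silting object. -/
def TStructureOn.FinitelyGenerated {D : Type u} [Category.{v} D] [HasZeroObject D]
    [Preadditive D] [HasShift D ℤ] [∀ n : ℤ, (shiftFunctor D n).Additive] [Pretriangulated D]
    {S : Set D} (t : TStructureOn D S) : Prop :=
  ∃ E : D, IsPartialSilting D S E ∧ t.U = preaisleGenOn D S E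

/-- A torsion class in the abelian category whose objects are `H` (the heart of a
t-structure on `D`, where short exact sequences correspond to distinguished triangles):
a strictly full subcategory closed under extensions and quotients, such that the
inclusion admits a right adjoint (expressed pointwise). -/
def IsTorsionClassOn (H T : Set D) : Prop :=
  T ⊆ H ∧ (∀ ⦃X Y : D⦄, (X ≅ Y) → X ∈ T → Y ∈ T) ∧
    (∀ Tr : Triangle D, (Tr ∈ distTriang D) → Tr.obj₁ ∈ T → Tr.obj₃ ∈ T → Tr.obj₂ ∈ H →
      Tr.obj₂ ∈ T) ∧
    (∀ Tr : Triangle D, (Tr ∈ distTriang D) → Tr.obj₁ ∈ H → Tr.obj₂ ∈ T → Tr.obj₃ ∈ H →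
      Tr.obj₃ ∈ T) ∧
    (∀ X ∈ H, ∃ (TX : D) (_ : TX ∈ T) (c : TX ⟶ X),
      ∀ (Y : D), Y ∈ T → ∀ φ : Y ⟶ X, ∃! ψ : Y ⟶ TX, ψ ≫ c = φ)

/-- A tilting torsion class: a torsion class such that every object of the heart embeds
(in the heart) into an object of the torsion class. -/
def IsTiltingTorsionClassOn (H T : Set D) : Prop :=
  IsTorsionClassOn D H T ∧ ∀ (X : D) (hX : X ∈ H), ∃ (T' : D) (_ : T' ∈ T) (hT'H : T' ∈ H)
    (f : X ⟶ T'), Mono (show (⟨X, hX⟩ : ObjectProperty.FullSubcategory (· ∈ H)) ⟶ ⟨T', hT'H⟩ from ObjectProperty.homMk f)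

end Triangulated

section Db

variable (A : Type u) [Category.{v} A] [Abelian A] [HasDerivedCategory.{w} A]

/-- The objects of the bounded derived category `D^b(A)`, i.e. the objects of the
derived category of `A` with bounded cohomology. -/
def Bdd : Set (DerivedCategory A) :=
  {X | ∃ a b : ℤ, ∀ n : ℤ, (n < a ∨ b < n) →
    IsZero ((DerivedCategory.homologyFunctor A n).obj X)}

lemma shift_mem_Bdd {X : DerivedCategory A} (hX : X ∈ Bdd A) (m : ℤ) : X⟦m⟧ ∈ Bdd A := by
  obtain ⟨a, b, h⟩ := hX
  refine ⟨a - m, b - m, fun n hn => ?_⟩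
  exact IsZero.of_iso (h (m + n) (by omega))
    (((DerivedCategory.homologyFunctor A 0).shiftIso m n (m + n) rfl).app X)

/-- The canonical functor `A ⥤ D^b(A) ⊆ D(A)`, sending an object to the corresponding
complex concentrated in degree `0`. -/
def singleQ : A ⥤ DerivedCategory A :=
  HomologicalComplex.single A (ComplexShape.up ℤ) 0 ⋙ DerivedCategory.Q

lemma singleQ_obj_mem_Bdd (M : A) : (singleQ A).obj M ∈ Bdd A := by
  refine ⟨0, 0, fun n hn => ?_⟩
  refine IsZero.of_iso ?_
    ((DerivedCategory.homologyFunctorFactors A n).app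
      ((HomologicalComplex.single A (ComplexShape.up ℤ) 0).obj M))
  exact HomologicalComplex.isZero_single_obj_homology _ _ M n (by omega)

/-- The bounded derived category of `A`, as the full subcategory of `D(A)` whose objects
have bounded cohomology. -/
abbrev BddCat := ObjectProperty.FullSubcategory (· ∈ Bdd A)

/-- The suspension functor on the bounded derived category. -/
def bddShift : BddCat A ⥤ BddCat A :=
  ObjectProperty.lift _ (ObjectProperty.ι _ ⋙ shiftFunctor (DerivedCategory A) (1 : ℤ))
    (fun X => shift_mem_Bdd A X.property 1)

/-- The canonical functor `A ⥤ D^b(A)`. -/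
def bddSingle : A ⥤ BddCat A :=
  ObjectProperty.lift _ (singleQ A) (singleQ_obj_mem_Bdd A)

/-- `A` has global dimension at most `d`: `Ext^n(M, N) = 0` for all `n > d`
(expressed via morphisms in the derived category). -/
def HasGlobalDimensionLE (d : ℕ) : Prop :=
  ∀ (M N : A) (n : ℤ), (d : ℤ) < n → ∀ f : (singleQ A).obj M ⟶ ((singleQ A).obj N)⟦n⟧, f = 0

/-- An abelian category is hereditary if `Ext²(-, -) = 0` (equivalently, it has global
dimension at most `1`). -/
def IsHereditaryCat : Prop := HasGlobalDimensionLE A 1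

/-- `A` is Ext-finite over `k`: all Ext-spaces between objects of `A` are
finite-dimensional over `k`. -/
def ExtFinite (k : Type u₁) [Field k] [CategoryTheory.Linear k (DerivedCategory A)] : Prop :=
  ∀ (M N : A) (n : ℤ),
    FiniteDimensional k ((singleQ A).obj M ⟶ ((singleQ A).obj N)⟦n⟧)

/-- The Grothendieck group `K₀` of an abelian category. -/
def K0 : Type u :=
  FreeAbelianGroup (Quotient (isIsomorphicSetoid A)) ⧸
    AddSubgroup.closure {x | ∃ Sc : ShortComplex A, Sc.ShortExact ∧
      x = FreeAbelianGroup.of (Quotient.mk (isIsomorphicSetoid A) Sc.X₂)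
        - FreeAbelianGroup.of (Quotient.mk (isIsomorphicSetoid A) Sc.X₁)
        - FreeAbelianGroup.of (Quotient.mk (isIsomorphicSetoid A) Sc.X₃)}

/-- The class of an object of `A` in `K₀(A)`. -/
def K0cls (M : A) : K0 A :=
  QuotientAddGroup.mk (FreeAbelianGroup.of (Quotient.mk (isIsomorphicSetoid A) M))

/-- `D^b(A)` is discrete: for every function `v : ℤ → K₀(A)` there are only finitely many
isomorphism classes of bounded objects `X` with `[H^i(X)] = v i` for all `i`. -/
def DerivedDiscrete : Prop :=
  ∀ v : ℤ → K0 A,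
    Set.Finite {c : Quotient (isIsomorphicSetoid (BddCat A)) |
      ∃ X : BddCat A, Quotient.mk (isIsomorphicSetoid (BddCat A)) X = c ∧
        ∀ i : ℤ, K0cls A ((DerivedCategory.homologyFunctor A i).obj X.obj) = v i}

end Db

/-- The property that the inclusion `ι : H ⟶ D` of a (heart-like) abelian subcategory
of the triangulated category `D` lifts to a triangulated equivalence from `D^b(H)` to
the strictly full subcategory of `D` with objects `S`. -/
structure DbEquivalence (H : Type u₁) [Category.{v₁} H] [Abelian H] [HasDerivedCategory.{w₁} H]
    (D : Type u) [Category.{v} D] [HasZeroObject D] [Preadditive D] [HasShift D ℤ]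
    [∀ n : ℤ, (shiftFunctor D n).Additive] [Pretriangulated D]
    (S : Set D) (ι : H ⥤ D) where
  /-- the underlying functor `D^b(H) ⥤ D` -/
  F : BddCat H ⥤ D
  mem : ∀ X : BddCat H, F.obj X ∈ S
  /-- `F` commutes with the suspension -/
  commShift : bddShift H ⋙ F ≅ F ⋙ shiftFunctor D (1 : ℤ)
  /-- `F` sends distinguished triangles of `D^b(H)` to distinguished triangles of `D` -/
  map_distinguished : ∀ (T : Triangle (DerivedCategory H)) (_ : T ∈ distTriang (DerivedCategory H))
      (h₁ : T.obj₁ ∈ Bdd H) (h₂ : T.obj₂ ∈ Bdd H) (h₃ : T.obj₃ ∈ Bdd H),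
      Triangle.mk (F.map (X := ⟨T.obj₁, h₁⟩) (Y := ⟨T.obj₂, h₂⟩) (ObjectProperty.homMk T.mor₁))
        (F.map (X := ⟨T.obj₂, h₂⟩) (Y := ⟨T.obj₃, h₃⟩) (ObjectProperty.homMk T.mor₂))
        (F.map (X := ⟨T.obj₃, h₃⟩) (Y := (bddShift H).obj ⟨T.obj₁, h₁⟩) (ObjectProperty.homMk T.mor₃) ≫
          commShift.hom.app ⟨T.obj₁, h₁⟩) ∈ distTriang D
  faithful : F.Faithful
  full : F.Full
  /-- `F` is essentially surjective onto the subcategory with objects `S` -/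
  essSurj : ∀ Y : D, Y ∈ S → ∃ X : BddCat H, Nonempty (F.obj X ≅ Y)
  /-- `F` extends the inclusion `ι` of `H` -/
  extends_incl : bddSingle H ⋙ F ≅ ι

section Algebra

/-- A ring `Γ` has global dimension at most `d`. -/
def RingGlobalDimLE (Γ : Type u) [Ring Γ] (d : ℕ) : Prop :=
  letI : HasDerivedCategory (ModuleCat.{u} Γ) := HasDerivedCategory.standard _
  HasGlobalDimensionLE (ModuleCat.{u} Γ) d

/-- The category `mod Λ` of finite-dimensional (equivalently, finitely generated) right
modules over a finite-dimensional algebra `Λ`, i.e. finitely generated left modules over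
`Λᵐᵒᵖ`. -/
abbrev ModA (Λ : Type u) [Ring Λ] := FGModuleCat Λᵐᵒᵖ

/-- A finite-dimensional algebra is hereditary if the category of its right modules is
hereditary, i.e. if `Λ` has right global dimension at most 1. -/
def HereditaryAlg (Λ : Type u) [Ring Λ] : Prop := RingGlobalDimLE Λᵐᵒᵖ 1

end Algebra

end Paper

namespace Paper

/-- Composite of a chain of morphisms `Z 0 ⟶ Z 1 ⟶ ⋯ ⟶ Z n`. -/
def chainComp {D : Type u} [Category.{v} D] (Z : ℕ → D) (g : ∀ i : ℕ, Z i ⟶ Z (i + 1)) :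
    ∀ n : ℕ, Z 0 ⟶ Z n
  | 0 => 𝟙 (Z 0)
  | n + 1 => chainComp Z g n ≫ g n

variable (A : Type u) [Category.{v} A] [Abelian A] [HasDerivedCategory.{w} A]

/-- The aisle of the standard t-structure on `D^b(A)`: bounded complexes with vanishing
cohomology in positive degrees. -/
def stdAisle : Set (DerivedCategory A) :=
  {X | X ∈ Bdd A ∧ ∀ n : ℤ, 0 < n → IsZero ((DerivedCategory.homologyFunctor A n).obj X)}

/-- The coaisle of the standard t-structure on `D^b(A)`: bounded complexes with vanishing
cohomology in negative degrees. -/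
def stdCoaisle : Set (DerivedCategory A) :=
  {X | X ∈ Bdd A ∧ ∀ n : ℤ, n < 0 → IsZero ((DerivedCategory.homologyFunctor A n).obj X)}

end Paper

/-!
Since `U` is `≤ 0`, `U[1]` is represented by a complex `L` concentrated in degrees `≤ -1`, and
`f` by a roof `M[0] ← K → L` with `K` concentrated in degrees `≤ 0`. As `K¹ = 0`, the
degree-zero component `K⁰ → M` of the quasi-isomorphism factors as `K⁰ ↠ H⁰(K) ≅ H⁰(M[0]) = M`,
so it is an epimorphism, and `K⁰[0] → K` lifts it along the roof. Its composite with `K → L`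
vanishes already on the level of complexes, because `L⁰ = 0`.
-/

namespace CochainComplex

open HomologicalComplex

variable {C : Type u} [Category.{v} C] [Abelian C]

lemma epi_f_comp_singleObjXSelf_hom {K : CochainComplex C ℤ} {i : ℤ} [K.IsStrictlyLE i] {M : C}
    (π : K ⟶ (single C (ComplexShape.up ℤ) i).obj M) [QuasiIsoAt π i] :
    Epi (π.f i ≫ (singleObjXSelf (ComplexShape.up ℤ) i M).hom) := by
  have : IsIso (K.iCycles i) := K.isIso_iCycles i (i + 1) (by simp)
    ((K.isZero_of_isStrictlyLE i (i + 1) (by simp)).eq_of_tgt _ _)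
  have hfac : π.f i ≫ (singleObjXSelf (ComplexShape.up ℤ) i M).hom =
      inv (K.iCycles i) ≫ K.homologyπ i ≫ homologyMap π i ≫
        (singleObjHomologySelfIso _ _ _).hom := by
    rw [← cancel_epi (K.iCycles i), IsIso.hom_inv_id_assoc, homologyπ_naturality_assoc,
      homologyπ_singleObjHomologySelfIso_hom, singleObjCyclesSelfIso_hom, cyclesMap_i_assoc]
  rw [hfac]
  infer_instance

end CochainComplex

namespace DerivedCategory

open HomologicalComplex

variable {C : Type u} [Category.{v} C] [Abelian C] [HasDerivedCategory.{w} C]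

lemma exists_epi_comp_eq_zero_of_isStrictlyLE {M : C} {L : CochainComplex C ℤ} {i : ℤ}
    (φ : Q.obj ((single C (ComplexShape.up ℤ) i).obj M) ⟶ Q.obj L) (n : ℤ) (hn : n < i)
    [L.IsStrictlyLE n] :
    ∃ (B : C) (e : B ⟶ M), Epi e ∧ Q.map ((single C (ComplexShape.up ℤ) i).map e) ≫ φ = 0 := by
  obtain ⟨K, _, π, hπ, g, rfl⟩ := right_fac_of_isStrictlyLE φ i
  rw [isIso_Q_map_iff_quasiIso] at hπ
  let s : (single C (ComplexShape.up ℤ) i).obj (K.X i) ⟶ K :=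
    mkHomFromSingle (𝟙 (K.X i)) fun j hj =>
      (K.isZero_of_isStrictlyLE i j (by simp only [ComplexShape.up_Rel] at hj; omega)).eq_of_tgt _ _
  have hs : s ≫ π = (single C (ComplexShape.up ℤ) i).map (π.f i ≫ (singleObjXSelf _ i M).hom) := by
    apply from_single_hom_ext
    simp [s, single_map_f_self]
  have hsg : s ≫ g = 0 := by
    apply from_single_hom_ext
    exact (L.isZero_of_isStrictlyLE n i hn).eq_of_tgt _ _
  refine ⟨K.X i, _, CochainComplex.epi_f_comp_singleObjXSelf_hom π, ?_⟩
  rw [← hs, Q.map_comp, Category.assoc, IsIso.hom_inv_id_assoc, ← Q.map_comp, hsg, Q.map_zero]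

lemma exists_epi_comp_eq_zero_of_isLE {M : C} {X : DerivedCategory C} {i : ℤ}
    (φ : Q.obj ((single C (ComplexShape.up ℤ) i).obj M) ⟶ X) (n : ℤ) (hn : n < i) [X.IsLE n] :
    ∃ (B : C) (e : B ⟶ M), Epi e ∧ Q.map ((single C (ComplexShape.up ℤ) i).map e) ≫ φ = 0 := by
  obtain ⟨L, _, ⟨α⟩⟩ := X.exists_iso_Q_obj_of_isLE n
  obtain ⟨B, e, he, h⟩ := exists_epi_comp_eq_zero_of_isStrictlyLE (φ ≫ α.hom) n hn
  refine ⟨B, e, he, ?_⟩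
  rw [← cancel_mono α.hom, Category.assoc, h, zero_comp]

end DerivedCategory

open Paper in
/-- Let `A` be an abelian category and `(U, V)` the standard t-structure on
`D^b(A)`.  For any `A₀ ∈ A`, any `U ∈ U` and any morphism `f : A₀[0] → U[1]`, there is an
epimorphism `B → A₀` in `A` such that the composite `B[0] → A₀[0] → U[1]` vanishes. -/
theorem exists_epi_killing_map_to_shifted_aisle
    (A : Type u) [Category.{v} A] [Abelian A] [HasDerivedCategory.{w} A]
    (M : A) (U : DerivedCategory A) (hU : U ∈ stdAisle A)
    (f : (singleQ A).obj M ⟶ U⟦(1 : ℤ)⟧) :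
    ∃ (B : A) (e : B ⟶ M), Epi e ∧ (singleQ A).map e ≫ f = 0 := by
  have hU₀ : U.IsLE 0 := (DerivedCategory.isLE_iff U 0).2 hU.2
  have hU₁ : (U⟦(1 : ℤ)⟧).IsLE (-1) := DerivedCategory.TStructure.t.isLE_shift U 0 1 (-1)
  exact DerivedCategory.exists_epi_comp_eq_zero_of_isLE f (-1) (by norm_num)
end
end

section
/- Let B be an abelian k-linear category and let f: A → C be a morphism in B such that End(A) is finite-dimensional over k. Then there exists a right minimal morphism g: B → C with f ∼_C g. -/
/-!
Common definitions for formalizing statements from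
"Derived equivalences for hereditary algebras: the role of the Serre functor".
-/

noncomputable section

open CategoryTheory CategoryTheory.Limits CategoryTheory.Pretriangulated

universe w₁ v₁ u₁ w v u

/-!
Induct on `dim End(A)`. If `f` is not right minimal, some non-invertible `h` satisfies
`h ≫ f = f`. In the finite-dimensional algebra `End(A)` there are `n` and `y` commuting with `h`
with `h ^ n = h ^ (n + 1) y`, and then `u = (h y) ^ n` is an idempotent `≠ 1` with
`u ≫ h ^ n = h ^ n`, so `u ≫ f = f`. Splitting `u` (an abelian category is idempotent complete)
exhibits a proper retract `I` of `A` with `f ∼_C (I ⟶ A ⟶ C)`, and conjugation embeds `End(I)`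
into `End(A)` without hitting `𝟙 A`, so `dim End(I) < dim End(A)`.
-/

open scoped IsMulCommutative in
theorem exists_commute_pow_eq_pow_succ_mul {k R : Type*} [Field k] [Ring R] [Algebra k R]
    [FiniteDimensional k R] (a : R) :
    ∃ (n : ℕ) (y : R), Commute a y ∧ a ^ n = a ^ (n + 1) * y := by
  have : IsMulCommutative (Algebra.adjoin k {a}) :=
    Algebra.isMulCommutative_adjoin k (by simp)
  -- `y` is found in the commutative Artinian subalgebra `k[a]`, where `a ^ n k[a]` stabilizes.
  have : IsArtinianRing (Algebra.adjoin k {a}) := IsArtinianRing.of_finite k _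
  let a' : Algebra.adjoin k {a} := ⟨a, Algebra.self_mem_adjoin_singleton k a⟩
  obtain ⟨n, y, hy⟩ := IsArtinian.exists_pow_succ_smul_dvd a' (1 : Algebra.adjoin k {a})
  refine ⟨n, y, congrArg Subtype.val (mul_comm a' y), ?_⟩
  simpa using congrArg Subtype.val hy.symm

/-- The witness is the Fitting idempotent `(a * y) ^ n`. -/
theorem exists_isIdempotentElem_ne_one_pow_mul_eq {R : Type*} [Ring R] {a y : R} {n : ℕ}
    (hay : Commute a y) (hn : a ^ n = a ^ (n + 1) * y) (ha : ¬IsUnit a) :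
    ∃ u : R, IsIdempotentElem u ∧ u ≠ 1 ∧ a ^ n * u = a ^ n := by
  set t := a * y with ht
  have hta : t * a ^ n = a ^ n := by
    rw [ht, mul_assoc, ← (hay.pow_left n).eq, ← mul_assoc, ← pow_succ', hn]
  have ht_pow (m : ℕ) : t ^ m * a ^ n = a ^ n := by
    induction m with
    | zero => simp
    | succ m ih => rw [pow_succ, mul_assoc, hta, ih]
  have hat : Commute (a ^ n) (t ^ n) := ((Commute.refl a).mul_right hay).pow_pow n n
  refine ⟨t ^ n, ?_, ?_, by rw [hat.eq, ht_pow]⟩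
  · have htn : t ^ n = a ^ n * y ^ n := hay.mul_pow n
    calc t ^ n * t ^ n = (t ^ n * a ^ n) * y ^ n := by nth_rw 2 [htn]; rw [← mul_assoc]
      _ = t ^ n := by rw [ht_pow, htn]
  · intro hu
    have ht_unit : IsUnit t := by
      rcases Nat.eq_zero_or_pos n with rfl | hpos
      · rw [ht, ← (by simpa using hn : (1 : R) = a * y)]
        exact isUnit_one
      · exact IsUnit.of_pow_eq_one hu hpos.ne'
    exact ha (hay.isUnit_mul_iff.mp ht_unit).1

namespace CategoryTheory.Retract

variable (k : Type*) [Field k] {D : Type u} [Category.{v} D] [Preadditive D] [Linear k D]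
  {X Y : D}

@[simps]
def endEmbedding (ρ : Retract X Y) : (X ⟶ X) →ₗ[k] (Y ⟶ Y) where
  toFun φ := ρ.r ≫ φ ≫ ρ.i
  map_add' φ ψ := by simp
  map_smul' c φ := by simp

theorem endEmbedding_injective (ρ : Retract X Y) : Function.Injective (ρ.endEmbedding k) := by
  intro φ ψ h
  simpa using congrArg (fun χ => ρ.i ≫ χ ≫ ρ.r) h

theorem finiteDimensional_end (ρ : Retract X Y) [FiniteDimensional k (Y ⟶ Y)] :
    FiniteDimensional k (X ⟶ X) :=
  .of_injective _ (ρ.endEmbedding_injective k)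

theorem finrank_end_lt (ρ : Retract X Y) [FiniteDimensional k (Y ⟶ Y)]
    (hρ : ρ.r ≫ ρ.i ≠ 𝟙 Y) : Module.finrank k (X ⟶ X) < Module.finrank k (Y ⟶ Y) := by
  have : FiniteDimensional k (X ⟶ X) := ρ.finiteDimensional_end k
  have hrange : LinearMap.range (ρ.endEmbedding k) ≠ ⊤ := by
    intro htop
    obtain ⟨φ, hφ⟩ := LinearMap.range_eq_top.mp htop (𝟙 Y)
    rw [endEmbedding_apply] at hφ
    apply hρ
    calc ρ.r ≫ ρ.i = (ρ.r ≫ φ ≫ ρ.i) ≫ ρ.r ≫ ρ.i := by rw [hφ, Category.id_comp]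
      _ = ρ.r ≫ φ ≫ ρ.i := by simp
      _ = 𝟙 Y := hφ
  rw [← LinearMap.finrank_range_of_inj (ρ.endEmbedding_injective k)]
  exact Submodule.finrank_lt hrange

end CategoryTheory.Retract

theorem CategoryTheory.End.pow_comp_eq_self {D : Type u} [Category.{v} D] {A C : D} {h : End A}
    {f : A ⟶ C} (hf : h ≫ f = f) (n : ℕ) : (h ^ n : End A) ≫ f = f := by
  induction n with
  | zero => exact Category.id_comp f
  | succ n ih => rw [pow_succ, End.mul_def, Category.assoc, ih, hf]

namespace Paper

variable {D : Type u} [Category.{v} D]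

theorem EquivOver.refl {A C : D} (f : A ⟶ C) : EquivOver D f f :=
  ⟨⟨𝟙 A, Category.id_comp f⟩, ⟨𝟙 A, Category.id_comp f⟩⟩

theorem EquivOver.trans {A₁ A₂ A₃ C : D} {f₁ : A₁ ⟶ C} {f₂ : A₂ ⟶ C} {f₃ : A₃ ⟶ C}
    (h₁₂ : EquivOver D f₁ f₂) (h₂₃ : EquivOver D f₂ f₃) : EquivOver D f₁ f₃ := by
  obtain ⟨⟨a, ha⟩, ⟨b, hb⟩⟩ := h₁₂
  obtain ⟨⟨c, hc⟩, ⟨d, hd⟩⟩ := h₂₃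
  exact ⟨⟨a ≫ c, by rw [Category.assoc, hc, ha]⟩, ⟨d ≫ b, by rw [Category.assoc, hb, hd]⟩⟩

theorem equivOver_retract_comp {I A C : D} (ρ : Retract I A) {f : A ⟶ C}
    (hf : ρ.r ≫ ρ.i ≫ f = f) : EquivOver D f (ρ.i ≫ f) :=
  ⟨⟨ρ.r, hf⟩, ⟨ρ.i, rfl⟩⟩

variable [Preadditive D] [IsIdempotentComplete D] (k : Type*) [Field k] [Linear k D]

/-- The retract splits the Fitting idempotent of a non-invertible `h` with `h ≫ f = f`. -/
theorem exists_retract_of_not_rightMinimal {A C : D} [FiniteDimensional k (A ⟶ A)] {f : A ⟶ C}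
    (hf : ¬RightMinimal D f) :
    ∃ (I : D) (ρ : Retract I A), ρ.r ≫ ρ.i ≠ 𝟙 A ∧ ρ.r ≫ ρ.i ≫ f = f := by
  obtain ⟨h, hhf, hh⟩ : ∃ h : End A, h ≫ f = f ∧ ¬IsIso h := by
    simp only [RightMinimal, not_forall, exists_prop] at hf
    exact hf
  have : FiniteDimensional k (End A) := ‹FiniteDimensional k (A ⟶ A)›
  obtain ⟨n, y, hhy, hn⟩ := exists_commute_pow_eq_pow_succ_mul (k := k) h
  obtain ⟨u, hu, hu1, hhu⟩ := exists_isIdempotentElem_ne_one_pow_mul_eq hhy hn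
    (by rwa [isUnit_iff_isIso])
  obtain ⟨I, i, r, hir, hri⟩ := IsIdempotentComplete.idempotents_split A u hu
  refine ⟨I, ⟨i, r, hir⟩, by simpa [hri] using hu1, ?_⟩
  calc r ≫ i ≫ f = u ≫ (h ^ n : End A) ≫ f := by
        rw [← Category.assoc, hri, End.pow_comp_eq_self hhf]
    _ = f := by rw [← Category.assoc, ← End.mul_def, hhu, End.pow_comp_eq_self hhf]

theorem exists_rightMinimal_equivOver {A C : D} [FiniteDimensional k (A ⟶ A)] (f : A ⟶ C) :
    ∃ (A' : D) (g : A' ⟶ C), RightMinimal D g ∧ EquivOver D f g := by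
  induction hn : Module.finrank k (A ⟶ A) using Nat.strong_induction_on generalizing A with
  | _ n ih =>
    by_cases hf : RightMinimal D f
    · exact ⟨A, f, hf, EquivOver.refl f⟩
    obtain ⟨I, ρ, hρ, hρf⟩ := exists_retract_of_not_rightMinimal k hf
    have : FiniteDimensional k (I ⟶ I) := ρ.finiteDimensional_end k
    obtain ⟨A', g, hg, hfg⟩ := ih _ (hn ▸ ρ.finrank_end_lt k hρ) (ρ.i ≫ f) rfl
    exact ⟨A', g, hg, (equivOver_retract_comp ρ hρf).trans hfg⟩

end Paper

open Paper in
/-- Let `B` be an abelian `k`-linear category and `f : A ⟶ C` a morphism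
with `End(A)` finite-dimensional over `k`.  Then there is a right minimal morphism
`g : B' ⟶ C` with `f ∼_C g`. -/
theorem exists_right_minimal_version
    (k : Type u₁) [Field k] (B : Type u) [Category.{v} B] [Abelian B]
    [CategoryTheory.Linear k B] {A C : B} (f : A ⟶ C)
    (hfd : FiniteDimensional k (A ⟶ A)) :
    ∃ (B' : B) (g : B' ⟶ C), RightMinimal B g ∧ EquivOver B f g :=
  exists_rightMinimal_equivOver k f
end
end

section
/- Let B be an abelian k-linear category and let f: A → C be a morphism with End(A) finite-dimensional over k. Then f is right minimal if and only if for every nonzero direct summand A' of A, the restriction f|_{A'}: A' → C of f to A' is nonzero. -/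
/-!
Common definitions for formalizing statements from
"Derived equivalences for hereditary algebras: the role of the Serre functor".
-/

noncomputable section

open CategoryTheory CategoryTheory.Limits CategoryTheory.Pretriangulated

universe w₁ v₁ u₁ w v u

/-!
Both sides are equivalent to: no nonzero idempotent `e` of `End A` satisfies `e ≫ f = 0`
(summands of `A` are images of idempotents, as abelian categories are idempotent complete).
For `h ≫ f = f`, write the minimal polynomial of `h` as `X ^ m * g` with `X ∤ g` and pick
`a * X ^ (m + 1) + b * g = 1`. Then `e = b(h) g(h)` is an idempotent with `e ≫ h ^ (m + 1) = 0`,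
hence `e ≫ f = 0`; so `e = 0`, and `a(h) h ^ m` is an inverse of `h`.
-/

open Polynomial in
theorem isUnit_of_isIntegral_of_forall_idempotent {k R : Type*} [Field k] [Ring R] [Algebra k R]
    {x : R} (hx : IsIntegral k x)
    (h : ∀ (e : R) (n : ℕ), IsIdempotentElem e → x ^ n * e = 0 → e = 0) : IsUnit x := by
  obtain ⟨g, hg, hXg⟩ := (minpoly k x).exists_eq_pow_rootMultiplicity_mul_and_not_dvd
    (minpoly.ne_zero hx) 0
  set m := (minpoly k x).rootMultiplicity 0
  simp only [map_zero, sub_zero] at hg hXg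
  obtain ⟨a, b, hab⟩ : IsCoprime (X ^ (m + 1) : k[X]) g :=
    ((irreducible_X.coprime_iff_not_dvd).2 hXg).pow_left
  set u := aeval x (a * X ^ m)
  set e := aeval x (b * g)
  have hux : u * x = 1 - e := by
    rw [show u * x = aeval x (a * X ^ m * X) by simp only [u, map_mul, aeval_X],
      show a * X ^ m * X = 1 - b * g by linear_combination hab, map_sub, map_one]
  have hxu : x * u = 1 - e := by
    rw [show x * u = aeval x (X * (a * X ^ m)) by simp only [u, map_mul, aeval_X],
      show X * (a * X ^ m) = 1 - b * g by linear_combination hab, map_sub, map_one]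
  have he : IsIdempotentElem e := by
    rw [IsIdempotentElem, ← map_mul,
      show b * g * (b * g) = b * g - a * b * X * minpoly k x by
        rw [hg]; linear_combination (b * g) * hab,
      map_sub, map_mul (aeval x) (a * b * X), minpoly.aeval, mul_zero, sub_zero]
  have hxe : x ^ (m + 1) * e = 0 := by
    rw [← aeval_X_pow (R := k), ← map_mul,
      show X ^ (m + 1) * (b * g) = X * b * minpoly k x by rw [hg]; ring,
      map_mul, minpoly.aeval, mul_zero]
  rw [h e (m + 1) he hxe, sub_zero] at hux hxu
  exact ⟨⟨x, u, hxu, hux⟩, rfl⟩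

theorem CategoryTheory.End.pow_comp_of_comp_eq {D : Type*} [Category D] {A Y : D} {f : A ⟶ Y}
    {h : End A} (hh : h ≫ f = f) (n : ℕ) : (h ^ n) ≫ f = f := by
  induction n with
  | zero => exact Category.id_comp f
  | succ n ih => rw [pow_succ, End.mul_def, Category.assoc, ih, hh]

namespace Paper

variable {D : Type*} [Category D] [Preadditive D] {A Y : D}

theorem forall_summand_comp_ne_zero_iff_forall_idempotent [IsIdempotentComplete D]
    (f : A ⟶ Y) :
    (∀ (A' : D) (i : A' ⟶ A) (p : A ⟶ A'), i ≫ p = 𝟙 A' → ¬ IsZero A' → i ≫ f ≠ 0) ↔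
      ∀ e : A ⟶ A, e ≫ e = e → e ≫ f = 0 → e = 0 := by
  constructor
  · intro hf e he hef
    obtain ⟨A', i, p, hip, hpi⟩ := IsIdempotentComplete.idempotents_split A e he
    have hif : i ≫ f = 0 := by
      rw [← Category.id_comp i, ← hip, Category.assoc, Category.assoc, reassoc_of% hpi, hef,
        comp_zero]
    have hA' : IsZero A' := by
      by_contra hA'
      exact hf A' i p hip hA' hif
    rw [← hpi, hA'.eq_zero_of_tgt p, zero_comp]
  · intro h A' i p hip hA' hif
    have hpi : p ≫ i = 0 := h _ (by rw [Category.assoc, reassoc_of% hip]) (by simp [hif])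
    refine hA' ((IsZero.iff_id_eq_zero A').2 ?_)
    calc 𝟙 A' = (i ≫ p) ≫ (i ≫ p) := by rw [hip, Category.id_comp]
      _ = i ≫ (p ≫ i) ≫ p := by simp only [Category.assoc]
      _ = 0 := by rw [hpi, zero_comp, comp_zero]

theorem RightMinimal.eq_zero_of_idempotent {f : A ⟶ Y} (hf : RightMinimal D f) {e : A ⟶ A}
    (he : e ≫ e = e) (hef : e ≫ f = 0) : e = 0 := by
  have : IsIso (𝟙 A - e) := hf _ (by rw [Preadditive.sub_comp, hef, Category.id_comp, sub_zero])
  exact (cancel_mono (𝟙 A - e)).1 (by rw [Preadditive.comp_sub, he, Category.comp_id,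
    sub_self, zero_comp])

theorem rightMinimal_of_forall_idempotent (k : Type*) [Field k] [Linear k D]
    [FiniteDimensional k (End A)] {f : A ⟶ Y}
    (hf : ∀ e : A ⟶ A, e ≫ e = e → e ≫ f = 0 → e = 0) : RightMinimal D f := by
  intro (h : End A) hh
  rw [← isUnit_iff_isIso]
  refine isUnit_of_isIntegral_of_forall_idempotent (IsIntegral.of_finite k h)
    fun e n he hhe => hf e he ?_
  calc e ≫ f = e ≫ (h ^ n) ≫ f := by rw [End.pow_comp_of_comp_eq hh]
    _ = (h ^ n * e) ≫ f := by rw [End.mul_def, Category.assoc]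
    _ = 0 := by rw [hhe, zero_comp]

end Paper

open Paper in
/-- Let `B` be an abelian `k`-linear category and `f : A ⟶ C` a morphism
with `End(A)` finite-dimensional over `k`.  Then `f` is right minimal iff for every nonzero
direct summand `A'` of `A` the restriction of `f` to `A'` is nonzero. -/
theorem right_minimal_iff_restriction_to_summands_nonzero
    (k : Type u₁) [Field k] (B : Type u) [Category.{v} B] [Abelian B]
    [CategoryTheory.Linear k B] {A C : B} (f : A ⟶ C)
    (hfd : FiniteDimensional k (A ⟶ A)) :
    RightMinimal B f ↔
      ∀ (A' : B) (i : A' ⟶ A) (p : A ⟶ A'), i ≫ p = 𝟙 A' → ¬ IsZero A' → i ≫ f ≠ 0 := by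
  have : FiniteDimensional k (End A) := hfd
  rw [forall_summand_comp_ne_zero_iff_forall_idempotent]
  exact ⟨fun hf _ => hf.eq_zero_of_idempotent, rightMinimal_of_forall_idempotent k⟩
end
end
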